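/- arXiv:1904.12677 — 2 statements merged into one kernel-verified Lean document; each statement's English description precedes it below -/
import Mathlib

section
/- Let D be an associative dialgebra over a field k. If GKdim D < 1, then GKdim D = 0. -/
/- Preliminaries: associative dialgebras, their Gelfand–Kirillov dimension,
   and the associated associative algebra. -/

namespace DialgGK

open Filter

/-- An associative dialgebra structure on a `k`-vector space `D`:
two bilinear associative operations `vd` (written `⊢` in the paper) and
`dv` (written `⊣`) satisfying the three dialgebra axioms. -/
structure DialgebraOps (k D : Type*) [Field k] [AddCommGroup D] [Module k D] where
  vd : D → D → D
  dv : D → D → D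
  vd_add_left : ∀ x y z, vd (x + y) z = vd x z + vd y z
  vd_add_right : ∀ x y z, vd x (y + z) = vd x y + vd x z
  vd_smul_left : ∀ (c : k) (x y), vd (c • x) y = c • vd x y
  vd_smul_right : ∀ (c : k) (x y), vd x (c • y) = c • vd x y
  dv_add_left : ∀ x y z, dv (x + y) z = dv x z + dv y z
  dv_add_right : ∀ x y z, dv x (y + z) = dv x y + dv x z
  dv_smul_left : ∀ (c : k) (x y), dv (c • x) y = c • dv x y
  dv_smul_right : ∀ (c : k) (x y), dv x (c • y) = c • dv x y
  vd_assoc : ∀ x y z, vd (vd x y) z = vd x (vd y z)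
  dv_assoc : ∀ x y z, dv (dv x y) z = dv x (dv y z)
  dv_vd : ∀ x y z, dv x (vd y z) = dv x (dv y z)
  vd_dv : ∀ x y z, vd (dv x y) z = vd (vd x y) z
  mid : ∀ x y z, vd x (dv y z) = dv (vd x y) z

variable {k : Type*} [Field k] {D : Type*} [AddCommGroup D] [Module k D]

/-- The span of all products `f x y` with `x ∈ V`, `y ∈ W`. -/
def opSpan (f : D → D → D) (V W : Submodule k D) : Submodule k D :=
  Submodule.span k {z | ∃ x ∈ V, ∃ y ∈ W, z = f x y}

/-- `diPow Dl V n` is `V^n`: `V^1 = V` and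
`V^n = Σ_{i=1}^{n-1} (V^i ⊢ V^{n-i} + V^i ⊣ V^{n-i})` for `n ≥ 2`. -/
def diPow (Dl : DialgebraOps k D) (V : Submodule k D) : ℕ → Submodule k D
  | 0 => ⊥
  | 1 => V
  | n + 2 =>
      ⨆ i : Fin (n + 1),
        opSpan Dl.vd (diPow Dl V (i.1 + 1)) (diPow Dl V (n + 1 - i.1)) ⊔
          opSpan Dl.dv (diPow Dl V (i.1 + 1)) (diPow Dl V (n + 1 - i.1))
  termination_by n => n
  decreasing_by
  all_goals (have := i.2; omega)

/-- `diPowLe Dl V n` is `V^{≤ n} = V^1 + ⋯ + V^n`. -/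
def diPowLe (Dl : DialgebraOps k D) (V : Submodule k D) (n : ℕ) : Submodule k D :=
  ⨆ i ∈ Finset.Icc 1 n, diPow Dl V i

/-- The Gelfand–Kirillov dimension of a dialgebra:
`GKdim D = sup_V limsup_{n→∞} log_n dim (V^{≤n})`, the supremum over all
finite-dimensional subspaces `V`. -/
noncomputable def diGKdim (Dl : DialgebraOps k D) : EReal :=
  ⨆ V : {V : Submodule k D // FiniteDimensional k V},
    Filter.limsup
      (fun n : ℕ => ((Real.logb n (Module.finrank k (diPowLe Dl V.1 n)) : ℝ) : EReal))
      Filter.atTop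

section Assoc

variable (k) {A : Type*} [NonUnitalRing A] [Module k A]
  [SMulCommClass k A A] [IsScalarTower k A A]

/-- `aPow k V n` is the `n`-th power `Vⁿ` of a subspace of an associative algebra:
the span of all products of `n` elements of `V`. -/
def aPow (V : Submodule k A) : ℕ → Submodule k A
  | 0 => ⊥
  | 1 => V
  | n + 2 => opSpan (· * ·) (aPow V (n + 1)) V

/-- `aPowLe k V n = V + V² + ⋯ + Vⁿ`. -/
def aPowLe (V : Submodule k A) (n : ℕ) : Submodule k A :=
  ⨆ i ∈ Finset.Icc 1 n, aPow k V i

variable (A) in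
/-- The Gelfand–Kirillov dimension of an associative algebra:
`GKdim A = sup_V limsup_{n→∞} log_n dim (V + V² + ⋯ + Vⁿ)`, the supremum over
all finite-dimensional subspaces `V`. -/
noncomputable def aGKdim : EReal :=
  ⨆ V : {V : Submodule k A // FiniteDimensional k V},
    Filter.limsup
      (fun n : ℕ => ((Real.logb n (Module.finrank k (aPowLe k V.1 n)) : ℝ) : EReal))
      Filter.atTop

end Assoc

/-- A sub-dialgebra: a linear subspace closed under both operations. -/
structure IsSubDialgebra (Dl : DialgebraOps k D) (P : Submodule k D) : Prop where
  vd_mem : ∀ ⦃x⦄, x ∈ P → ∀ ⦃y⦄, y ∈ P → Dl.vd x y ∈ P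
  dv_mem : ∀ ⦃x⦄, x ∈ P → ∀ ⦃y⦄, y ∈ P → Dl.dv x y ∈ P

/-- The smallest sub-dialgebra containing a set `X`; `D` is generated by `X`
iff this closure is `⊤`. -/
def subDialgebraClosure (Dl : DialgebraOps k D) (X : Set D) : Submodule k D :=
  sInf {P : Submodule k D | IsSubDialgebra Dl P ∧ X ⊆ ↑P}

/-- The dialgebra structure induced on a sub-dialgebra. -/
def DialgebraOps.restrict (Dl : DialgebraOps k D) {P : Submodule k D}
    (h : IsSubDialgebra Dl P) : DialgebraOps k ↥P where
  vd x y := ⟨Dl.vd x y, h.vd_mem x.2 y.2⟩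
  dv x y := ⟨Dl.dv x y, h.dv_mem x.2 y.2⟩
  vd_add_left := by intros; apply Subtype.ext; simp [Dl.vd_add_left]
  vd_add_right := by intros; apply Subtype.ext; simp [Dl.vd_add_right]
  vd_smul_left := by intros; apply Subtype.ext; simp [Dl.vd_smul_left]
  vd_smul_right := by intros; apply Subtype.ext; simp [Dl.vd_smul_right]
  dv_add_left := by intros; apply Subtype.ext; simp [Dl.dv_add_left]
  dv_add_right := by intros; apply Subtype.ext; simp [Dl.dv_add_right]
  dv_smul_left := by intros; apply Subtype.ext; simp [Dl.dv_smul_left]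
  dv_smul_right := by intros; apply Subtype.ext; simp [Dl.dv_smul_right]
  vd_assoc := by intros; apply Subtype.ext; simp [Dl.vd_assoc]
  dv_assoc := by intros; apply Subtype.ext; simp [Dl.dv_assoc]
  dv_vd := by intros; apply Subtype.ext; simp [Dl.dv_vd]
  vd_dv := by intros; apply Subtype.ext; simp [Dl.vd_dv]
  mid := by intros; apply Subtype.ext; simp [Dl.mid]

/-- A (two-sided) ideal of a dialgebra. -/
structure IsDiIdeal (Dl : DialgebraOps k D) (I : Submodule k D) : Prop where
  vd_mem_left : ∀ ⦃x⦄, x ∈ I → ∀ y : D, Dl.vd x y ∈ I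
  vd_mem_right : ∀ ⦃x⦄, x ∈ I → ∀ y : D, Dl.vd y x ∈ I
  dv_mem_left : ∀ ⦃x⦄, x ∈ I → ∀ y : D, Dl.dv x y ∈ I
  dv_mem_right : ∀ ⦃x⦄, x ∈ I → ∀ y : D, Dl.dv y x ∈ I

/-- The ideal of the dialgebra generated by a set `S`. -/
def diIdealGen (Dl : DialgebraOps k D) (S : Set D) : Submodule k D :=
  sInf {I : Submodule k D | IsDiIdeal Dl I ∧ S ⊆ ↑I}

/-- The set `S = {x ⊢ y − x ⊣ y : x, y ∈ D}`. -/
def diS (Dl : DialgebraOps k D) : Set D :=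
  {z | ∃ x y : D, z = Dl.vd x y - Dl.dv x y}

/-- `π : D →ₗ[k] A` realizes `A` as the associative algebra `A_D = D / Id(S)`
associated to the dialgebra `D`: it is surjective, turns both operations into
the multiplication of `A`, and has kernel exactly `Id(S)`. -/
structure IsAssociatedAlgebra {A : Type*} [NonUnitalRing A] [Module k A]
    [SMulCommClass k A A] [IsScalarTower k A A]
    (Dl : DialgebraOps k D) (π : D →ₗ[k] A) : Prop where
  surjective : Function.Surjective π
  map_vd : ∀ x y, π (Dl.vd x y) = π x * π y
  map_dv : ∀ x y, π (Dl.dv x y) = π x * π y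
  ker : LinearMap.ker π = diIdealGen Dl (diS Dl)

/-- `a ⊣ b₁ ⊣ b₂ ⊣ ⋯ ⊣ bₙ` (left-normed). -/
def dashvList (Dl : DialgebraOps k D) : D → List D → D
  | a, [] => a
  | a, b :: l => dashvList Dl (Dl.dv a b) l

/-- `b₁ ⊢ b₂ ⊢ ⋯ ⊢ bₙ ⊢ a` (right-normed). -/
def vdashList (Dl : DialgebraOps k D) : List D → D → D
  | [], a => a
  | b :: l, a => Dl.vd b (vdashList Dl l a)

/-- The monomial `pre₁ ⊢ ⋯ ⊢ preₛ ⊢ mid ⊣ post₁ ⊣ ⋯ ⊣ postₜ`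
(all parenthesizations agree by the dialgebra axioms). -/
def monomial (Dl : DialgebraOps k D) (pre : List D) (mid : D) (post : List D) : D :=
  vdashList Dl pre (dashvList Dl mid post)

/-- The value in `D` of the formal monomial `[u]_p = [a₁ … aₙ]_p`
(`u` a word in letters `L`, interpreted via `xf : L → D`), that is
`a₁ ⊢ ⋯ ⊢ a_{p-1} ⊢ a_p ⊣ a_{p+1} ⊣ ⋯ ⊣ aₙ`;  `0` if `p` is out of range. -/
def fmVal (Dl : DialgebraOps k D) {L : Type*} (xf : L → D) (u : List L) (p : ℕ) : D :=
  match (u.map xf).drop (p - 1) with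
  | [] => 0
  | a :: rest => monomial Dl ((u.map xf).take (p - 1)) a rest

/-- `[x_s x_{s+1} … x_t]_p`, the monomial on the (indexed) letters
`x_s, …, x_t` with middle entry `x_p`. -/
def diBracket (Dl : DialgebraOps k D) (x : ℕ → D) (s t p : ℕ) : D :=
  fmVal Dl x ((List.range (t + 1 - s)).map fun i => s + i) (p + 1 - s)

/-- `(u, m)` is a valid formal monomial `[u]_m`: `u` nonempty and `1 ≤ m ≤ ℓ(u)`. -/
def validMono {L : Type*} (w : List L × ℕ) : Prop :=
  w.1 ≠ [] ∧ 1 ≤ w.2 ∧ w.2 ≤ w.1.length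

/-- The length-middle-lexicographic order on formal monomials:
`[u]_p < [v]_q` iff `(ℓ(u), p, u) < (ℓ(v), q, v)` lexicographically
(words of equal length being compared letterwise). -/
def lmlLt {L : Type*} [LinearOrder L] (a b : List L × ℕ) : Prop :=
  a.1.length < b.1.length ∨
    (a.1.length = b.1.length ∧
      (a.2 < b.2 ∨ (a.2 = b.2 ∧ List.Lex (· < ·) a.1 b.1)))

variable (k) in
/-- The shortest-middle-lexicographic basis of the dialgebra (generated by the
letters `L` via `xf`): the set of formal monomials whose value is nonzero and
is not a linear combination of values of strictly smaller monomials. -/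
def smlBasis (Dl : DialgebraOps k D) {L : Type*} [LinearOrder L] (xf : L → D) :
    Set (List L × ℕ) :=
  {w | validMono w ∧ fmVal Dl xf w.1 w.2 ≠ 0 ∧
    fmVal Dl xf w.1 w.2 ∉
      Submodule.span k
        ((fun w' : List L × ℕ => fmVal Dl xf w'.1 w'.2) ''
          {w' | validMono w' ∧ lmlLt w' w})}

/-- The value in an associative algebra of the formal monomial `[u]_p`:
just the product `a₁a₂⋯aₙ` (independent of the middle index). -/
def amVal {A L : Type*} [NonUnitalRing A] (xf : L → A) (u : List L) : A :=
  match u.map xf with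
  | [] => 0
  | a :: rest => List.foldl (· * ·) a rest

/-- The shortest-middle-lexicographic basis of an associative algebra
(generated by the letters `L` via `xf`). -/
def smlBasisA (k : Type*) {A L : Type*} [Field k] [NonUnitalRing A] [Module k A]
    [SMulCommClass k A A] [IsScalarTower k A A] [LinearOrder L] (xf : L → A) :
    Set (List L × ℕ) :=
  {w | validMono w ∧ amVal xf w.1 ≠ 0 ∧
    amVal xf w.1 ∉
      Submodule.span k
        ((fun w' : List L × ℕ => amVal xf w'.1) ''
          {w' | validMono w' ∧ lmlLt w' w})}

/-- Every associative algebra is a dialgebra with both operations equal to its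
multiplication. -/
def mulDialgebra (k A : Type*) [Field k] [NonUnitalRing A] [Module k A]
    [SMulCommClass k A A] [IsScalarTower k A A] : DialgebraOps k A where
  vd x y := x * y
  dv x y := x * y
  vd_add_left := add_mul
  vd_add_right := mul_add
  vd_smul_left := smul_mul_assoc
  vd_smul_right c x y := (mul_smul_comm c x y)
  dv_add_left := add_mul
  dv_add_right := mul_add
  dv_smul_left := smul_mul_assoc
  dv_smul_right c x y := (mul_smul_comm c x y)
  vd_assoc := mul_assoc
  dv_assoc := mul_assoc
  dv_vd _ _ _ := rfl
  vd_dv _ _ _ := rfl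
  mid x y z := (mul_assoc x y z).symm

end DialgGK

/-! The dialgebra axioms let every product of `n + 1` factors from `V` be rewritten as
`V ⊢ (product of n factors)` or `(product of n factors) ⊣ V`, so `V^{≤n+1} = V + V ⊢ V^{≤n} + V^{≤n} ⊣ V`.
Hence as soon as `V^{≤N+1} = V^{≤N}` the chain is constant and `log_n dim V^{≤n} → 0`; otherwise it
grows strictly, `dim V^{≤n} ≥ n`, and the `limsup` is at least `1`. -/

section Bilinear

variable {R M₁ M₂ M₃ M₁₂ M₂₃ P : Type*} [CommSemiring R]
  [AddCommMonoid M₁] [AddCommMonoid M₂] [AddCommMonoid M₃] [AddCommMonoid M₁₂] [AddCommMonoid M₂₃]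
  [AddCommMonoid P] [Module R M₁] [Module R M₂] [Module R M₃] [Module R M₁₂] [Module R M₂₃]
  [Module R P]

theorem Submodule.map₂_map₂_left_le {F : M₁₂ →ₗ[R] M₃ →ₗ[R] P} {G : M₁ →ₗ[R] M₂ →ₗ[R] M₁₂}
    {F' : M₁ →ₗ[R] M₂₃ →ₗ[R] P} {G' : M₂ →ₗ[R] M₃ →ₗ[R] M₂₃}
    (h : ∀ a b c, F (G a b) c = F' a (G' b c))
    (A : Submodule R M₁) (B : Submodule R M₂) (C : Submodule R M₃) :
    map₂ F (map₂ G A B) C ≤ map₂ F' A (map₂ G' B C) := by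
  refine map₂_le.2 fun x hx c hc => ?_
  have : map₂ G A B ≤ (map₂ F' A (map₂ G' B C)).comap (F.flip c) :=
    map₂_le.2 fun a ha b hb => by
      simpa [h] using apply_mem_map₂ _ ha (apply_mem_map₂ _ hb hc)
  exact this hx

theorem Submodule.map₂_map₂_right_le {F : M₁ →ₗ[R] M₂₃ →ₗ[R] P} {G : M₂ →ₗ[R] M₃ →ₗ[R] M₂₃}
    {F' : M₁₂ →ₗ[R] M₃ →ₗ[R] P} {G' : M₁ →ₗ[R] M₂ →ₗ[R] M₁₂}
    (h : ∀ a b c, F a (G b c) = F' (G' a b) c)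
    (A : Submodule R M₁) (B : Submodule R M₂) (C : Submodule R M₃) :
    map₂ F A (map₂ G B C) ≤ map₂ F' (map₂ G' A B) C := by
  refine map₂_le.2 fun a ha x hx => ?_
  have : map₂ G B C ≤ (map₂ F' (map₂ G' A B) C).comap (F a) :=
    map₂_le.2 fun b hb c hc => by
      simpa [h] using apply_mem_map₂ _ (apply_mem_map₂ _ ha hb) hc
  exact this hx

end Bilinear

theorem Function.iterate_eventually_const_or_strictMono {α : Type*} [PartialOrder α]
    {f : α → α} (hf : Monotone f) {x : α} (hx : x ≤ f x) :
    (∃ N, ∀ n ≥ N, f^[n] x = f^[N] x) ∨ StrictMono fun n => f^[n] x := by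
  by_cases hfix : ∃ N, f (f^[N] x) = f^[N] x
  · obtain ⟨N, hN⟩ := hfix
    refine .inl ⟨N, fun n hn => ?_⟩
    obtain ⟨m, rfl⟩ := Nat.exists_eq_add_of_le hn
    rw [Nat.add_comm, Function.iterate_add_apply, Function.iterate_fixed hN]
  · push Not at hfix
    refine .inr (strictMono_nat_of_lt_succ fun n => ?_)
    rw [Function.iterate_succ_apply']
    exact (hf.monotone_iterate_of_le_map hx n.le_succ |>.trans_eq
      (Function.iterate_succ_apply' f n x)).lt_of_ne (hfix n).symm

section Logb

open Filter Topology

theorem tendsto_logb_natCast_const (c : ℝ) :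
    Tendsto (fun n : ℕ => Real.logb n c) atTop (𝓝 0) :=
  tendsto_const_nhds.div_atTop (Real.tendsto_log_atTop.comp tendsto_natCast_atTop_atTop)

theorem limsup_logb_eq_zero_of_eventually_eq {a : ℕ → ℕ} {c : ℕ} (h : ∀ᶠ n in atTop, a n = c) :
    limsup (fun n : ℕ => ((Real.logb n (a n) : ℝ) : EReal)) atTop = 0 := by
  refine Tendsto.limsup_eq ?_
  refine (EReal.tendsto_coe.2 (tendsto_logb_natCast_const c)).congr' ?_
  filter_upwards [h] with n hn
  rw [hn]

theorem one_le_limsup_logb_of_strictMono {a : ℕ → ℕ} (ha : StrictMono a) :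
    1 ≤ limsup (fun n : ℕ => ((Real.logb n (a n) : ℝ) : EReal)) atTop := by
  refine le_limsup_of_frequently_le (Eventually.frequently ?_)
  filter_upwards [eventually_ge_atTop 2] with n hn
  have hn' : (1 : ℝ) < n := by exact_mod_cast hn
  rw [← EReal.coe_one, EReal.coe_le_coe_iff, ← Real.logb_self_eq_one hn']
  exact Real.logb_le_logb_of_le hn' (by linarith) (by exact_mod_cast ha.id_le n)

end Logb

namespace DialgGK

open Submodule

variable {k : Type*} [Field k] {D : Type*} [AddCommGroup D] [Module k D]

def DialgebraOps.vdLin (Dl : DialgebraOps k D) : D →ₗ[k] D →ₗ[k] D :=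
  LinearMap.mk₂ k Dl.vd Dl.vd_add_left Dl.vd_smul_left Dl.vd_add_right Dl.vd_smul_right

def DialgebraOps.dvLin (Dl : DialgebraOps k D) : D →ₗ[k] D →ₗ[k] D :=
  LinearMap.mk₂ k Dl.dv Dl.dv_add_left Dl.dv_smul_left Dl.dv_add_right Dl.dv_smul_right

@[simp] theorem DialgebraOps.vdLin_apply (Dl : DialgebraOps k D) (x y : D) :
    Dl.vdLin x y = Dl.vd x y := rfl

@[simp] theorem DialgebraOps.dvLin_apply (Dl : DialgebraOps k D) (x y : D) :
    Dl.dvLin x y = Dl.dv x y := rfl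

theorem opSpan_eq_map₂ (F : D →ₗ[k] D →ₗ[k] D) (V W : Submodule k D) :
    opSpan (fun x y => F x y) V W = map₂ F V W := by
  rw [map₂_eq_span_image2, opSpan]
  congr 1
  ext z
  simp only [Set.mem_ofPred_eq, Set.mem_image2, SetLike.mem_coe, eq_comm]

variable (Dl : DialgebraOps k D) (V : Submodule k D)

local infixl:70 " ⊢ₛ " => map₂ Dl.vdLin
local infixl:70 " ⊣ₛ " => map₂ Dl.dvLin

theorem diPow_add_two (n : ℕ) :
    diPow Dl V (n + 2) = ⨆ i : Fin (n + 1),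
      diPow Dl V (i + 1) ⊢ₛ diPow Dl V (n + 1 - i) ⊔ diPow Dl V (i + 1) ⊣ₛ diPow Dl V (n + 1 - i) := by
  rw [diPow]
  simp only [← opSpan_eq_map₂, DialgebraOps.vdLin_apply, DialgebraOps.dvLin_apply]

def diPowLeStep (X : Submodule k D) : Submodule k D :=
  V ⊔ V ⊢ₛ X ⊔ X ⊣ₛ V

theorem diPowLeStep_mono : Monotone (diPowLeStep Dl V) := fun _ _ h =>
  sup_le_sup (sup_le_sup_left (map₂_le_map₂_right h) _) (map₂_le_map₂_left h)

local notation "W[" n "]" => (diPowLeStep Dl V)^[n] ⊥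

theorem monotone_iterate_diPowLeStep : Monotone fun n => W[n] :=
  (diPowLeStep_mono Dl V).monotone_iterate_of_le_map bot_le

theorem iterate_succ_diPowLeStep (n : ℕ) : W[n + 1] = V ⊔ V ⊢ₛ W[n] ⊔ W[n] ⊣ₛ V :=
  Function.iterate_succ_apply' _ _ _

theorem vd_iterate_le_iterate_succ (n : ℕ) : V ⊢ₛ W[n] ≤ W[n + 1] := by
  rw [iterate_succ_diPowLeStep]
  exact le_sup_right.trans le_sup_left

theorem iterate_dv_le_iterate_succ (n : ℕ) : W[n] ⊣ₛ V ≤ W[n + 1] := by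
  rw [iterate_succ_diPowLeStep]
  exact le_sup_right

theorem iterate_vd_iterate_le (a b : ℕ) : W[a] ⊢ₛ W[b] ≤ W[a + b] := by
  induction a generalizing b with
  | zero => simp
  | succ a ih =>
    have hmono := monotone_iterate_diPowLeStep Dl V
    rw [iterate_succ_diPowLeStep, map₂_sup_left, map₂_sup_left, Nat.add_right_comm]
    refine sup_le (sup_le ?_ ?_) ?_
    · exact (map₂_le_map₂_right (hmono (by omega))).trans (vd_iterate_le_iterate_succ Dl V _)
    · calc (V ⊢ₛ W[a]) ⊢ₛ W[b] ≤ V ⊢ₛ (W[a] ⊢ₛ W[b]) :=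
            map₂_map₂_left_le (fun _ _ _ => Dl.vd_assoc _ _ _) _ _ _
        _ ≤ V ⊢ₛ W[a + b] := map₂_le_map₂_right (ih b)
        _ ≤ W[a + b + 1] := vd_iterate_le_iterate_succ Dl V _
    · calc (W[a] ⊣ₛ V) ⊢ₛ W[b] ≤ W[a] ⊢ₛ (V ⊢ₛ W[b]) :=
            map₂_map₂_left_le (fun _ _ _ => by simp [Dl.vd_dv, Dl.vd_assoc]) _ _ _
        _ ≤ W[a] ⊢ₛ W[b + 1] := map₂_le_map₂_right (vd_iterate_le_iterate_succ Dl V b)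
        _ ≤ W[a + b + 1] := ih (b + 1)

theorem iterate_dv_iterate_le (a b : ℕ) : W[a] ⊣ₛ W[b] ≤ W[a + b] := by
  induction b generalizing a with
  | zero => simp
  | succ b ih =>
    have hmono := monotone_iterate_diPowLeStep Dl V
    rw [iterate_succ_diPowLeStep, map₂_sup_right, map₂_sup_right, ← Nat.add_assoc]
    refine sup_le (sup_le ?_ ?_) ?_
    · exact (map₂_le_map₂_left (hmono (by omega))).trans (iterate_dv_le_iterate_succ Dl V _)
    · calc W[a] ⊣ₛ (V ⊢ₛ W[b]) ≤ (W[a] ⊣ₛ V) ⊣ₛ W[b] :=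
            map₂_map₂_right_le (fun _ _ _ => by simp [Dl.dv_vd, Dl.dv_assoc]) _ _ _
        _ ≤ W[a + 1] ⊣ₛ W[b] := map₂_le_map₂_left (iterate_dv_le_iterate_succ Dl V a)
        _ ≤ W[a + b + 1] := by simpa [Nat.add_right_comm] using ih (a + 1)
    · calc W[a] ⊣ₛ (W[b] ⊣ₛ V) ≤ (W[a] ⊣ₛ W[b]) ⊣ₛ V :=
            map₂_map₂_right_le (fun _ _ _ => (Dl.dv_assoc _ _ _).symm) _ _ _
        _ ≤ W[a + b] ⊣ₛ V := map₂_le_map₂_left (ih a)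
        _ ≤ W[a + b + 1] := iterate_dv_le_iterate_succ Dl V _

theorem diPow_le_iterate (n : ℕ) : diPow Dl V n ≤ W[n] := by
  induction n using Nat.strong_induction_on with
  | _ n ih =>
    match n, ih with
    | 0, _ => simp [diPow]
    | 1, _ => simp [diPow, diPowLeStep]
    | n + 2, ih =>
      rw [diPow_add_two]
      refine iSup_le fun i => ?_
      have hsum : i + 1 + (n + 1 - i) = n + 2 := by omega
      rw [← hsum]
      exact sup_le
        ((map₂_le_map₂ (ih _ (by omega)) (ih _ (by omega))).trans (iterate_vd_iterate_le Dl V _ _))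
        ((map₂_le_map₂ (ih _ (by omega)) (ih _ (by omega))).trans (iterate_dv_iterate_le Dl V _ _))

theorem diPow_vd_diPow_le_diPow (a b : ℕ) :
    diPow Dl V (a + 1) ⊢ₛ diPow Dl V (b + 1) ≤ diPow Dl V (a + b + 2) := by
  rw [diPow_add_two]
  refine le_trans ?_ (le_iSup _ ⟨a, by omega⟩)
  simp [show a + b + 1 - a = b + 1 by omega]

theorem diPow_dv_diPow_le_diPow (a b : ℕ) :
    diPow Dl V (a + 1) ⊣ₛ diPow Dl V (b + 1) ≤ diPow Dl V (a + b + 2) := by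
  rw [diPow_add_two]
  refine le_trans ?_ (le_iSup _ ⟨a, by omega⟩)
  simp [show a + b + 1 - a = b + 1 by omega]

theorem diPow_le_diPowLe {i n : ℕ} (h1 : 1 ≤ i) (h2 : i ≤ n) : diPow Dl V i ≤ diPowLe Dl V n :=
  le_biSup (diPow Dl V) (Finset.mem_Icc.2 ⟨h1, h2⟩)

theorem diPowLeStep_diPowLe_le (n : ℕ) :
    diPowLeStep Dl V (diPowLe Dl V n) ≤ diPowLe Dl V (n + 1) := by
  have hV : V ≤ diPowLe Dl V (n + 1) := by
    simpa [diPow] using diPow_le_diPowLe Dl V le_rfl (Nat.le_add_left 1 n)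
  refine sup_le (sup_le hV ?_) ?_ <;>
    rw [diPowLe] <;>
    simp only [map₂_iSup_left, map₂_iSup_right] <;>
    refine iSup₂_le fun i hi => ?_ <;>
    obtain ⟨⟨j, rfl⟩, hj⟩ : (∃ j, i = j + 1) ∧ i ≤ n :=
      ⟨⟨i - 1, by grind⟩, (Finset.mem_Icc.1 hi).2⟩
  · simpa [diPow, Nat.add_comm 2] using
      (diPow_vd_diPow_le_diPow Dl V 0 j).trans (diPow_le_diPowLe Dl V (by omega) (by omega))
  · simpa [diPow] using
      (diPow_dv_diPow_le_diPow Dl V j 0).trans (diPow_le_diPowLe Dl V (by omega) (by omega))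

theorem diPowLe_eq_iterate (n : ℕ) : diPowLe Dl V n = W[n] := by
  refine le_antisymm (iSup₂_le fun i hi => ?_) ?_
  · exact (diPow_le_iterate Dl V i).trans
      (monotone_iterate_diPowLeStep Dl V (Finset.mem_Icc.1 hi).2)
  · induction n with
    | zero => simp
    | succ n ih =>
      rw [Function.iterate_succ_apply']
      exact (diPowLeStep_mono Dl V ih).trans (diPowLeStep_diPowLe_le Dl V n)

theorem fg_iterate_diPowLeStep (hV : V.FG) (n : ℕ) : (W[n]).FG := by
  induction n with
  | zero => exact fg_bot
  | succ n ih =>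
    rw [iterate_succ_diPowLeStep]
    exact (hV.sup (hV.map₂ _ ih)).sup (ih.map₂ _ hV)

instance finiteDimensional_diPowLe [FiniteDimensional k V] (n : ℕ) :
    FiniteDimensional k (diPowLe Dl V n) := by
  rw [← fg_iff_finiteDimensional, diPowLe_eq_iterate]
  exact fg_iterate_diPowLeStep Dl V (fg_iff_finiteDimensional V |>.2 ‹_›) n

theorem diPowLe_eventually_const_or_strictMono :
    (∃ N, ∀ n ≥ N, diPowLe Dl V n = diPowLe Dl V N) ∨ StrictMono (diPowLe Dl V) := by
  rw [show diPowLe Dl V = fun n => W[n] from funext (diPowLe_eq_iterate Dl V)]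
  exact Function.iterate_eventually_const_or_strictMono (diPowLeStep_mono Dl V) bot_le

theorem limsup_logb_finrank_diPowLe_eq_zero (h : diGKdim Dl < 1) [FiniteDimensional k V] :
    Filter.limsup (fun n : ℕ => ((Real.logb n (Module.finrank k (diPowLe Dl V n)) : ℝ) : EReal))
      Filter.atTop = 0 := by
  rcases diPowLe_eventually_const_or_strictMono Dl V with ⟨N, hN⟩ | hmono
  · exact limsup_logb_eq_zero_of_eventually_eq
      (Filter.eventually_atTop.2 ⟨N, fun n hn => by rw [hN n hn]⟩)
  · have hle : 1 ≤ diGKdim Dl := (one_le_limsup_logb_of_strictMono fun _ _ hmn =>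
      finrank_lt_finrank_of_lt (hmono hmn)).trans (le_iSup_of_le ⟨V, ‹_›⟩ le_rfl)
    exact (h.not_ge hle).elim

end DialgGK

open DialgGK in
/-- If `GKdim D < 1` then `GKdim D = 0`. -/
theorem diGKdim_eq_zero_of_lt_one
    {k : Type*} [Field k] {D : Type*} [AddCommGroup D] [Module k D] (Dl : DialgebraOps k D) (h : diGKdim Dl < 1) :
    diGKdim Dl = 0 := by
  have : Nonempty {V : Submodule k D // FiniteDimensional k V} := ⟨⟨⊥, inferInstance⟩⟩
  exact (iSup_congr fun ⟨V, _⟩ => limsup_logb_finrank_diPowLe_eq_zero Dl V h).trans iSup_const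
end

section
/- Let D be an associative dialgebra over a field k generated by a single element a, and suppose that the family of elements [a…a]_p (the monomial with n copies of a and middle index p, for all integers n ≥ 1 and 1 ≤ p ≤ n) is linearly independent over k. Then GKdim D = 2. -/
namespace DialgGKAux
open DialgGK Submodule Filter

variable {k : Type*} [Field k] {D : Type*} [AddCommGroup D] [Module k D]
variable (Dl : DialgebraOps k D)

/-- `⊢` as a bilinear map. -/
def vdL : D →ₗ[k] D →ₗ[k] D :=
  LinearMap.mk₂ k Dl.vd Dl.vd_add_left Dl.vd_smul_left Dl.vd_add_right Dl.vd_smul_right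

/-- `⊣` as a bilinear map. -/
def dvL : D →ₗ[k] D →ₗ[k] D :=
  LinearMap.mk₂ k Dl.dv Dl.dv_add_left Dl.dv_smul_left Dl.dv_add_right Dl.dv_smul_right

lemma opSpan_eq_map₂ (f : D → D → D) (fL : D →ₗ[k] D →ₗ[k] D) (hf : ∀ x y, fL x y = f x y)
    (V W : Submodule k D) : opSpan f V W = Submodule.map₂ fL V W := by
  conv_rhs => rw [← span_eq V, ← span_eq W, map₂_span_span]
  unfold opSpan
  congr 1
  ext z
  simp only [Set.mem_image2, Set.mem_setOf_eq, hf, SetLike.mem_coe]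
  constructor
  · rintro ⟨x, hx, y, hy, rfl⟩; exact ⟨x, hx, y, hy, rfl⟩
  · rintro ⟨x, hx, y, hy, rfl⟩; exact ⟨x, hx, y, hy, rfl⟩

lemma opSpan_vd_eq (V W : Submodule k D) : opSpan Dl.vd V W = Submodule.map₂ (vdL Dl) V W :=
  opSpan_eq_map₂ Dl.vd (vdL Dl) (fun _ _ => rfl) V W

lemma opSpan_dv_eq (V W : Submodule k D) : opSpan Dl.dv V W = Submodule.map₂ (dvL Dl) V W :=
  opSpan_eq_map₂ Dl.dv (dvL Dl) (fun _ _ => rfl) V W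

lemma mem_opSpan (f : D → D → D) {V W : Submodule k D} {x y : D} (hx : x ∈ V) (hy : y ∈ W) :
    f x y ∈ opSpan f V W :=
  subset_span ⟨x, hx, y, hy, rfl⟩

/- list lemmas -/

lemma dashvList_append (x : D) (l1 l2 : List D) :
    dashvList Dl x (l1 ++ l2) = dashvList Dl (dashvList Dl x l1) l2 := by
  induction l1 generalizing x with
  | nil => rfl
  | cons b l ih =>
    show dashvList Dl (Dl.dv x b) (l ++ l2) = _
    rw [ih]
    rfl

lemma vdashList_append (l1 l2 : List D) (w : D) :
    vdashList Dl (l1 ++ l2) w = vdashList Dl l1 (vdashList Dl l2 w) := by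
  induction l1 with
  | nil => rfl
  | cons b l ih =>
    show Dl.vd b (vdashList Dl (l ++ l2) w) = _
    rw [ih]
    rfl

lemma vd_dashvList (m : D) (l : List D) (y : D) :
    Dl.vd (dashvList Dl m l) y = vdashList Dl (m :: l) y := by
  induction l generalizing m with
  | nil => rfl
  | cons b l ih =>
    show Dl.vd (dashvList Dl (Dl.dv m b) l) y = _
    rw [ih]
    show Dl.vd (Dl.dv m b) (vdashList Dl l y) = _
    rw [Dl.vd_dv, Dl.vd_assoc]
    rfl

lemma vd_vdashList (l : List D) (w y : D) :
    Dl.vd (vdashList Dl l w) y = vdashList Dl l (Dl.vd w y) := by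
  induction l with
  | nil => rfl
  | cons b l ih =>
    show Dl.vd (Dl.vd b (vdashList Dl l w)) y = _
    rw [Dl.vd_assoc, ih]
    rfl

lemma dv_dashvList (x m : D) (l : List D) :
    Dl.dv x (dashvList Dl m l) = dashvList Dl x (m :: l) := by
  induction l generalizing m with
  | nil => rfl
  | cons b l ih =>
    show Dl.dv x (dashvList Dl (Dl.dv m b) l) = _
    rw [ih]
    show dashvList Dl (Dl.dv x (Dl.dv m b)) l = _
    rw [← Dl.dv_assoc]
    rfl

lemma dv_vdashList (x : D) (l : List D) (w : D) :
    Dl.dv x (vdashList Dl l w) = Dl.dv (dashvList Dl x l) w := by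
  induction l generalizing x with
  | nil => rfl
  | cons b l ih =>
    show Dl.dv x (Dl.vd b (vdashList Dl l w)) = _
    rw [Dl.dv_vd, ← Dl.dv_assoc, ih]
    rfl

lemma dashvList_vd (b u : D) (l : List D) :
    dashvList Dl (Dl.vd b u) l = Dl.vd b (dashvList Dl u l) := by
  induction l generalizing u with
  | nil => rfl
  | cons c l ih =>
    show dashvList Dl (Dl.dv (Dl.vd b u) c) l = _
    rw [← Dl.mid, ih]
    rfl

lemma dashvList_vdashList (l : List D) (w : D) (L : List D) :
    dashvList Dl (vdashList Dl l w) L = vdashList Dl l (dashvList Dl w L) := by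
  induction l with
  | nil => rfl
  | cons b l ih =>
    show dashvList Dl (Dl.vd b (vdashList Dl l w)) L = _
    rw [dashvList_vd, ih]
    rfl

/- the one-generator monomials -/
variable (a : D)

/-- `[a^{s+t+1}]_{s+1}` : `s` letters `a` under `⊢`, then `a`, then `t` letters under `⊣`. -/
def cmon (s t : ℕ) : D :=
  vdashList Dl (List.replicate s a) (dashvList Dl a (List.replicate t a))

lemma cmon_zero_zero : cmon Dl a 0 0 = a := rfl

lemma vd_cmon_left (s t : ℕ) (y : D) :
    Dl.vd (cmon Dl a s t) y = vdashList Dl (List.replicate (s + t + 1) a) y := by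
  unfold cmon
  rw [vd_vdashList, vd_dashvList, ← vdashList_append, ← List.replicate_succ, ← List.replicate_add]
  have hst : s + (t + 1) = s + t + 1 := by omega
  rw [hst]

lemma cmon_vd (s t s' t' : ℕ) :
    Dl.vd (cmon Dl a s t) (cmon Dl a s' t') = cmon Dl a (s + t + 1 + s') t' := by
  rw [vd_cmon_left]
  unfold cmon
  rw [← vdashList_append, ← List.replicate_add]

lemma dv_cmon_right (x : D) (s' t' : ℕ) :
    Dl.dv x (cmon Dl a s' t') = dashvList Dl x (List.replicate (s' + t' + 1) a) := by
  unfold cmon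
  rw [dv_vdashList, dv_dashvList, ← dashvList_append, ← List.replicate_succ, ← List.replicate_add]
  have hst : s' + (t' + 1) = s' + t' + 1 := by omega
  rw [hst]

lemma cmon_dv (s t s' t' : ℕ) :
    Dl.dv (cmon Dl a s t) (cmon Dl a s' t') = cmon Dl a s (t + (s' + t' + 1)) := by
  rw [dv_cmon_right]
  unfold cmon
  rw [dashvList_vdashList, ← dashvList_append, ← List.replicate_add]

lemma fmVal_replicate (n p : ℕ) (hp1 : 1 ≤ p) (hpn : p ≤ n) :
    fmVal Dl (id : D → D) (List.replicate n a) p = cmon Dl a (p - 1) (n - p) := by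
  unfold fmVal
  rw [List.map_id, List.drop_replicate]
  have h1 : n - (p - 1) = (n - p) + 1 := by omega
  rw [h1, List.replicate_succ]
  show monomial Dl (List.take (p-1) (List.replicate n a)) a (List.replicate (n-p) a) = _
  have h2 : List.take (p-1) (List.replicate n a) = List.replicate (p-1) a := by
    rw [List.take_replicate]
    congr 1
    omega
  rw [h2]
  rfl

end DialgGKAux
namespace DialgGKAux
open DialgGK Submodule Filter

variable {k : Type*} [Field k] {D : Type*} [AddCommGroup D] [Module k D]
variable (Dl : DialgebraOps k D)

lemma diPow_zero (V : Submodule k D) : diPow Dl V 0 = ⊥ := by rw [diPow]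

lemma diPow_one (V : Submodule k D) : diPow Dl V 1 = V := by rw [diPow]

lemma diPow_add_two (V : Submodule k D) (n : ℕ) :
    diPow Dl V (n + 2) = ⨆ i : Fin (n + 1),
        opSpan Dl.vd (diPow Dl V (i.1 + 1)) (diPow Dl V (n + 1 - i.1)) ⊔
          opSpan Dl.dv (diPow Dl V (i.1 + 1)) (diPow Dl V (n + 1 - i.1)) := by
  rw [diPow]

lemma le_diPow_add (V : Submodule k D) {i j : ℕ} (hi : 1 ≤ i) (hj : 1 ≤ j) :
    opSpan Dl.vd (diPow Dl V i) (diPow Dl V j) ⊔ opSpan Dl.dv (diPow Dl V i) (diPow Dl V j)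
      ≤ diPow Dl V (i + j) := by
  obtain ⟨n, hn⟩ : ∃ n, i + j = n + 2 := ⟨i + j - 2, by omega⟩
  rw [hn, diPow_add_two]
  have hι : i - 1 < n + 1 := by omega
  refine le_trans (le_of_eq ?_) (le_iSup _ (⟨i - 1, hι⟩ : Fin (n + 1)))
  have hv : ((⟨i - 1, hι⟩ : Fin (n + 1)) : ℕ) = i - 1 := rfl
  have h1 : i - 1 + 1 = i := by omega
  have h2 : n + 1 - (i - 1) = j := by omega
  rw [hv, h1, h2]

lemma map₂_vdL_diPow_le (V : Submodule k D) {i j : ℕ} (hi : 1 ≤ i) (hj : 1 ≤ j) :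
    Submodule.map₂ (vdL Dl) (diPow Dl V i) (diPow Dl V j) ≤ diPow Dl V (i + j) := by
  rw [← opSpan_vd_eq]
  exact le_sup_left.trans (le_diPow_add Dl V hi hj)

lemma map₂_dvL_diPow_le (V : Submodule k D) {i j : ℕ} (hi : 1 ≤ i) (hj : 1 ≤ j) :
    Submodule.map₂ (dvL Dl) (diPow Dl V i) (diPow Dl V j) ≤ diPow Dl V (i + j) := by
  rw [← opSpan_dv_eq]
  exact le_sup_right.trans (le_diPow_add Dl V hi hj)

/-- `Mⁿ`: the span of the degree-`n` monomials in `a`. -/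
def Mn (a : D) (n : ℕ) : Submodule k D :=
  span k ((fun p : ℕ × ℕ => cmon Dl a p.1 p.2) '' {p | p.1 + p.2 + 1 = n})

variable (a : D)

lemma Mn_zero : Mn Dl a 0 = ⊥ := by
  have h : {p : ℕ × ℕ | p.1 + p.2 + 1 = 0} = ∅ := by
    ext p; simp
  simp only [Mn, h, Set.image_empty, span_empty]

lemma Mn_one : Mn Dl a 1 = span k {a} := by
  have h : {p : ℕ × ℕ | p.1 + p.2 + 1 = 1} = {(0, 0)} := by
    ext p
    simp only [Set.mem_setOf_eq, Set.mem_singleton_iff, Prod.ext_iff]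
    omega
  simp only [Mn, h, Set.image_singleton, cmon_zero_zero]

lemma cmon_mem_Mn {s t n : ℕ} (h : s + t + 1 = n) : cmon Dl a s t ∈ Mn Dl a n :=
  subset_span ⟨(s, t), h, rfl⟩

lemma diPow_eq_Mn : ∀ n, diPow Dl (span k {a}) n = Mn Dl a n := by
  intro n
  induction n using Nat.strong_induction_on with
  | _ n ih =>
    match n with
    | 0 => rw [diPow_zero, Mn_zero]
    | 1 => rw [diPow_one, Mn_one]
    | (m + 2) =>
      apply le_antisymm
      · rw [diPow_add_two]
        apply iSup_le
        intro i
        have him : (i : ℕ) < m + 1 := i.2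
        have hi1 : (i : ℕ) + 1 < m + 2 := by omega
        have hi2 : m + 1 - (i : ℕ) < m + 2 := by omega
        rw [ih _ hi1, ih _ hi2]
        apply sup_le
        · rw [opSpan_vd_eq]
          simp only [Mn]
          rw [map₂_span_span]
          apply span_le.mpr
          rintro z ⟨x, hx, y, hy, rfl⟩
          obtain ⟨p, hp, rfl⟩ := hx
          obtain ⟨q, hq, rfl⟩ := hy
          simp only [Set.mem_setOf_eq] at hp hq
          beta_reduce
          have hz : (vdL Dl) (cmon Dl a p.1 p.2) (cmon Dl a q.1 q.2)
              = cmon Dl a (p.1 + p.2 + 1 + q.1) q.2 := cmon_vd Dl a _ _ _ _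
          rw [hz]
          exact subset_span ⟨(p.1 + p.2 + 1 + q.1, q.2), by simp only [Set.mem_setOf_eq]; omega, rfl⟩
        · rw [opSpan_dv_eq]
          simp only [Mn]
          rw [map₂_span_span]
          apply span_le.mpr
          rintro z ⟨x, hx, y, hy, rfl⟩
          obtain ⟨p, hp, rfl⟩ := hx
          obtain ⟨q, hq, rfl⟩ := hy
          simp only [Set.mem_setOf_eq] at hp hq
          beta_reduce
          have hz : (dvL Dl) (cmon Dl a p.1 p.2) (cmon Dl a q.1 q.2)
              = cmon Dl a p.1 (p.2 + (q.1 + q.2 + 1)) := cmon_dv Dl a _ _ _ _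
          rw [hz]
          exact subset_span ⟨(p.1, p.2 + (q.1 + q.2 + 1)), by simp only [Set.mem_setOf_eq]; omega, rfl⟩
      · simp only [Mn]
        apply span_le.mpr
        rintro z ⟨p, hp, rfl⟩
        simp only [Set.mem_setOf_eq] at hp
        beta_reduce
        rcases Nat.eq_zero_or_pos p.2 with ht | ht
        · have hs : 1 ≤ p.1 := by omega
          have heq : 0 + 0 + 1 + (p.1 - 1) = p.1 := by omega
          have hz : Dl.vd (cmon Dl a 0 0) (cmon Dl a (p.1 - 1) p.2) = cmon Dl a p.1 p.2 := by
            rw [cmon_vd, heq]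
          rw [← hz]
          have h1 : Dl.vd (cmon Dl a 0 0) (cmon Dl a (p.1 - 1) p.2) ∈
              opSpan Dl.vd (diPow Dl (span k {a}) 1) (diPow Dl (span k {a}) (m + 1)) := by
            apply mem_opSpan
            · rw [diPow_one, ← cmon_zero_zero Dl a]
              exact subset_span rfl
            · rw [ih (m + 1) (by omega)]
              exact cmon_mem_Mn Dl a (by omega)
          have hle : opSpan Dl.vd (diPow Dl (span k {a}) 1) (diPow Dl (span k {a}) (m + 1))
              ≤ diPow Dl (span k {a}) (m + 2) := by
            have := le_sup_left.trans
              (le_diPow_add Dl (span k {a}) (i := 1) (j := m + 1) (by omega) (by omega))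
            have h12 : 1 + (m + 1) = m + 2 := by omega
            rwa [h12] at this
          exact hle h1
        · have heq : p.2 - 1 + (0 + 0 + 1) = p.2 := by omega
          have hz : Dl.dv (cmon Dl a p.1 (p.2 - 1)) (cmon Dl a 0 0) = cmon Dl a p.1 p.2 := by
            rw [cmon_dv, heq]
          rw [← hz]
          have h1 : Dl.dv (cmon Dl a p.1 (p.2 - 1)) (cmon Dl a 0 0) ∈
              opSpan Dl.dv (diPow Dl (span k {a}) (m + 1)) (diPow Dl (span k {a}) 1) := by
            apply mem_opSpan
            · rw [ih (m + 1) (by omega)]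
              exact cmon_mem_Mn Dl a (by omega)
            · rw [diPow_one, ← cmon_zero_zero Dl a]
              exact subset_span rfl
          have hle : opSpan Dl.dv (diPow Dl (span k {a}) (m + 1)) (diPow Dl (span k {a}) 1)
              ≤ diPow Dl (span k {a}) (m + 2) := by
            have := le_sup_right.trans
              (le_diPow_add Dl (span k {a}) (i := m + 1) (j := 1) (by omega) (by omega))
            simpa using this
          exact hle h1

lemma diPowLe_mono (V : Submodule k D) : Monotone (diPowLe Dl V) := by
  intro n n' h
  exact biSup_mono fun i hi => Finset.mem_Icc.mpr ⟨(Finset.mem_Icc.mp hi).1,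
    (Finset.mem_Icc.mp hi).2.trans h⟩

lemma diPow_le_diPowLe (V : Submodule k D) {i n : ℕ} (h1 : 1 ≤ i) (h2 : i ≤ n) :
    diPow Dl V i ≤ diPowLe Dl V n :=
  le_biSup _ (Finset.mem_Icc.mpr ⟨h1, h2⟩)

lemma cmon_mem_diPowLe {s t n : ℕ} (h : s + t + 1 ≤ n) :
    cmon Dl a s t ∈ diPowLe Dl (span k {a}) n := by
  apply diPow_le_diPowLe Dl (span k {a}) (i := s + t + 1) (by omega) h
  rw [diPow_eq_Mn]
  exact cmon_mem_Mn Dl a rfl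

lemma map₂_diPowLe (V : Submodule k D) (fL : D →ₗ[k] D →ₗ[k] D)
    (hd : ∀ i j : ℕ, 1 ≤ i → 1 ≤ j →
      Submodule.map₂ fL (diPow Dl V i) (diPow Dl V j) ≤ diPow Dl V (i + j)) (s t : ℕ) :
    Submodule.map₂ fL (diPowLe Dl V s) (diPowLe Dl V t) ≤ diPowLe Dl V (s + t) := by
  simp only [diPowLe]
  rw [map₂_iSup_left]
  apply iSup_le; intro i
  rw [map₂_iSup_left]
  apply iSup_le; intro hi
  rw [map₂_iSup_right]
  apply iSup_le; intro j
  rw [map₂_iSup_right]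
  apply iSup_le; intro hj
  rw [Finset.mem_Icc] at hi hj
  refine (hd i j (by omega) (by omega)).trans (le_biSup _ (Finset.mem_Icc.mpr ⟨by omega, by omega⟩))

lemma opSpan_vd_diPowLe (V : Submodule k D) (s t : ℕ) :
    opSpan Dl.vd (diPowLe Dl V s) (diPowLe Dl V t) ≤ diPowLe Dl V (s + t) := by
  rw [opSpan_vd_eq]
  exact map₂_diPowLe Dl V _ (fun i j hi hj => map₂_vdL_diPow_le Dl V hi hj) s t

lemma opSpan_dv_diPowLe (V : Submodule k D) (s t : ℕ) :
    opSpan Dl.dv (diPowLe Dl V s) (diPowLe Dl V t) ≤ diPowLe Dl V (s + t) := by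
  rw [opSpan_dv_eq]
  exact map₂_diPowLe Dl V _ (fun i j hi hj => map₂_dvL_diPow_le Dl V hi hj) s t

lemma diPow_le_of_le (V B : Submodule k D) (m : ℕ) (hV : V ≤ diPowLe Dl B m) :
    ∀ j, diPow Dl V j ≤ diPowLe Dl B (m * j) := by
  intro j
  induction j using Nat.strong_induction_on with
  | _ j ih =>
    match j with
    | 0 => rw [diPow_zero]; exact bot_le
    | 1 => rw [diPow_one, mul_one]; exact hV
    | (n + 2) =>
      rw [diPow_add_two]
      apply iSup_le; intro i
      have him : (i : ℕ) < n + 1 := i.2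
      have h1 : (i : ℕ) + 1 < n + 2 := by omega
      have h2 : n + 1 - (i : ℕ) < n + 2 := by omega
      have hkey : m * ((i : ℕ) + 1) + m * (n + 1 - (i : ℕ)) = m * (n + 2) := by
        rw [← Nat.mul_add]
        congr 1
        omega
      apply sup_le
      · rw [opSpan_vd_eq]
        refine le_trans (map₂_le_map₂ (ih _ h1) (ih _ h2)) ?_
        rw [← hkey]
        exact map₂_diPowLe Dl B _ (fun i j hi hj => map₂_vdL_diPow_le Dl B hi hj) _ _
      · rw [opSpan_dv_eq]
        refine le_trans (map₂_le_map₂ (ih _ h1) (ih _ h2)) ?_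
        rw [← hkey]
        exact map₂_diPowLe Dl B _ (fun i j hi hj => map₂_dvL_diPow_le Dl B hi hj) _ _

lemma diPowLe_le_of_le (V B : Submodule k D) (m : ℕ) (hV : V ≤ diPowLe Dl B m) (n : ℕ) :
    diPowLe Dl V n ≤ diPowLe Dl B (m * n) := by
  apply iSup_le; intro i
  apply iSup_le; intro hi
  rw [Finset.mem_Icc] at hi
  exact (diPow_le_of_le Dl V B m hV i).trans
    (diPowLe_mono Dl B (Nat.mul_le_mul_left m hi.2))

lemma iSup_diPowLe_eq_top (hgen : subDialgebraClosure Dl {a} = ⊤) :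
    (⨆ n, diPowLe Dl (span k {a}) n) = ⊤ := by
  set U := ⨆ n, diPowLe Dl (span k {a}) n with hU
  have hdir := (diPowLe_mono Dl (span k {a})).directed_le
  have hsub : IsSubDialgebra Dl U := by
    constructor
    · intro x hx y hy
      obtain ⟨i, hxi⟩ := (mem_iSup_of_directed _ hdir).mp hx
      obtain ⟨j, hyj⟩ := (mem_iSup_of_directed _ hdir).mp hy
      have h1 : Dl.vd x y ∈ opSpan Dl.vd (diPowLe Dl (span k {a}) i) (diPowLe Dl (span k {a}) j) :=
        mem_opSpan _ hxi hyj
      exact le_iSup (fun n => diPowLe Dl (span k {a}) n) (i + j)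
        (opSpan_vd_diPowLe Dl (span k {a}) i j h1)
    · intro x hx y hy
      obtain ⟨i, hxi⟩ := (mem_iSup_of_directed _ hdir).mp hx
      obtain ⟨j, hyj⟩ := (mem_iSup_of_directed _ hdir).mp hy
      have h1 : Dl.dv x y ∈ opSpan Dl.dv (diPowLe Dl (span k {a}) i) (diPowLe Dl (span k {a}) j) :=
        mem_opSpan _ hxi hyj
      exact le_iSup (fun n => diPowLe Dl (span k {a}) n) (i + j)
        (opSpan_dv_diPowLe Dl (span k {a}) i j h1)
  have ha : a ∈ U := by
    apply le_iSup (fun n => diPowLe Dl (span k {a}) n) 1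
    apply diPow_le_diPowLe Dl (span k {a}) le_rfl le_rfl
    rw [diPow_one]
    exact subset_span rfl
  refine le_antisymm le_top ?_
  rw [← hgen]
  exact sInf_le ⟨hsub, Set.singleton_subset_iff.mpr ha⟩

lemma exists_le_diPowLe (hgen : subDialgebraClosure Dl {a} = ⊤)
    (V : Submodule k D) (hV : FiniteDimensional k V) :
    ∃ m, 1 ≤ m ∧ V ≤ diPowLe Dl (span k {a}) m := by
  have hfg : V.FG := (Submodule.fg_top V).mp (Module.finite_def.mp hV)
  have hc := (Submodule.fg_iff_compact V).mp hfg
  rw [CompleteLattice.isCompactElement_iff_le_of_directed_sSup_le] at hc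
  obtain ⟨P, hPmem, hP⟩ := hc (Set.range (diPowLe Dl (span k {a}))) ⟨_, ⟨0, rfl⟩⟩
    ((diPowLe_mono Dl (span k {a})).directed_le.directedOn_range)
    (by rw [sSup_range, iSup_diPowLe_eq_top Dl a hgen]; exact le_top)
  obtain ⟨m, rfl⟩ := Set.mem_range.mp hPmem
  exact ⟨m + 1, by omega, hP.trans (diPowLe_mono Dl (span k {a}) (by omega))⟩

end DialgGKAux
namespace DialgGKAux
open DialgGK Submodule Filter

variable {k : Type*} [Field k] {D : Type*} [AddCommGroup D] [Module k D]
variable (Dl : DialgebraOps k D) (a : D)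

lemma cmon_linearIndependent
    (hli : LinearIndependent k
      (fun w : {q : ℕ × ℕ // 1 ≤ q.2 ∧ q.2 ≤ q.1} =>
        fmVal Dl (id : D → D) (List.replicate w.1.1 a) w.1.2)) :
    LinearIndependent k (fun p : ℕ × ℕ => cmon Dl a p.1 p.2) := by
  set e : ℕ × ℕ → {q : ℕ × ℕ // 1 ≤ q.2 ∧ q.2 ≤ q.1} :=
    fun p => ⟨(p.1 + p.2 + 1, p.1 + 1), by constructor <;> omega⟩ with he
  have hinj : Function.Injective e := by
    intro p q h
    simp only [he, Subtype.mk.injEq, Prod.mk.injEq] at h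
    rw [Prod.ext_iff]
    constructor <;> omega
  have hcomp := hli.comp e hinj
  have hfun : (fun w : {q : ℕ × ℕ // 1 ≤ q.2 ∧ q.2 ≤ q.1} =>
      fmVal Dl (id : D → D) (List.replicate w.1.1 a) w.1.2) ∘ e
      = fun p : ℕ × ℕ => cmon Dl a p.1 p.2 := by
    funext p
    show fmVal Dl (id : D → D) (List.replicate (p.1 + p.2 + 1) a) (p.1 + 1) = _
    rw [fmVal_replicate Dl a _ _ (by omega) (by omega)]
    have e1 : p.1 + 1 - 1 = p.1 := by omega
    have e2 : p.1 + p.2 + 1 - (p.1 + 1) = p.2 := by omega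
    rw [e1, e2]
  rwa [hfun] at hcomp

/-- The span of the monomials `cmon s t` for `s, t < N`. -/
def grid (N : ℕ) : Submodule k D :=
  span k (Set.range (fun q : Fin N × Fin N => cmon Dl a q.1.1 q.2.1))

lemma grid_fd (N : ℕ) : FiniteDimensional k (grid Dl a N) :=
  FiniteDimensional.span_of_finite k (Set.finite_range _)

lemma finrank_grid (hcli : LinearIndependent k (fun p : ℕ × ℕ => cmon Dl a p.1 p.2)) (N : ℕ) :
    Module.finrank k (grid Dl a N) = N * N := by
  have hinj : Function.Injective (fun q : Fin N × Fin N => ((q.1.1, q.2.1) : ℕ × ℕ)) := by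
    intro q r h
    simp only [Prod.mk.injEq] at h
    rw [Prod.ext_iff]
    exact ⟨Fin.ext h.1, Fin.ext h.2⟩
  have h2 := hcli.comp _ hinj
  have h3 := finrank_span_eq_card h2
  simp only [Fintype.card_prod, Fintype.card_fin] at h3
  exact h3

lemma diPowLe_le_grid (n : ℕ) : diPowLe Dl (span k {a}) n ≤ grid Dl a n := by
  apply iSup_le; intro i
  apply iSup_le; intro hi
  rw [Finset.mem_Icc] at hi
  rw [diPow_eq_Mn]
  simp only [Mn]
  apply span_le.mpr
  rintro z ⟨p, hp, rfl⟩
  simp only [Set.mem_setOf_eq] at hp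
  beta_reduce
  exact subset_span ⟨(⟨p.1, by omega⟩, ⟨p.2, by omega⟩), rfl⟩

lemma grid_le_diPowLe (m n : ℕ) (h : 2 * m ≤ n + 1) :
    grid Dl a m ≤ diPowLe Dl (span k {a}) n := by
  apply span_le.mpr
  rintro z ⟨q, rfl⟩
  beta_reduce
  have h1 := q.1.2
  have h2 := q.2.2
  exact cmon_mem_diPowLe Dl a (by omega)

lemma fd_diPowLe_gen (n : ℕ) : FiniteDimensional k (diPowLe Dl (span k {a}) n) := by
  haveI := grid_fd Dl a n
  exact Submodule.finiteDimensional_of_le (diPowLe_le_grid Dl a n)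

lemma finrank_diPowLe_upper (hcli : LinearIndependent k (fun p : ℕ × ℕ => cmon Dl a p.1 p.2))
    (n : ℕ) : Module.finrank k (diPowLe Dl (span k {a}) n) ≤ n * n := by
  haveI := grid_fd Dl a n
  calc Module.finrank k (diPowLe Dl (span k {a}) n)
      ≤ Module.finrank k (grid Dl a n) := Submodule.finrank_mono (diPowLe_le_grid Dl a n)
    _ = n * n := finrank_grid Dl a hcli n

lemma finrank_diPowLe_lower (hcli : LinearIndependent k (fun p : ℕ × ℕ => cmon Dl a p.1 p.2))
    (n : ℕ) : (n / 2) * (n / 2) ≤ Module.finrank k (diPowLe Dl (span k {a}) n) := by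
  haveI := fd_diPowLe_gen Dl a n
  calc (n / 2) * (n / 2) = Module.finrank k (grid Dl a (n / 2)) :=
        (finrank_grid Dl a hcli (n / 2)).symm
    _ ≤ Module.finrank k (diPowLe Dl (span k {a}) n) :=
        Submodule.finrank_mono (grid_le_diPowLe Dl a (n / 2) n (by omega))

lemma finrank_diPowLe_V (hcli : LinearIndependent k (fun p : ℕ × ℕ => cmon Dl a p.1 p.2))
    (V : Submodule k D) (m : ℕ) (hV : V ≤ diPowLe Dl (span k {a}) m) (n : ℕ) :
    Module.finrank k (diPowLe Dl V n) ≤ (m * n) * (m * n) := by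
  haveI := grid_fd Dl a (m * n)
  calc Module.finrank k (diPowLe Dl V n)
      ≤ Module.finrank k (grid Dl a (m * n)) :=
        Submodule.finrank_mono ((diPowLe_le_of_le Dl V _ m hV n).trans (diPowLe_le_grid Dl a (m * n)))
    _ = (m * n) * (m * n) := finrank_grid Dl a hcli (m * n)

end DialgGKAux
namespace DialgGKAux
open DialgGK Submodule Filter

lemma tendsto_logb_const (c : ℝ) :
    Tendsto (fun n : ℕ => Real.logb n c) atTop (nhds 0) := by
  have h : Tendsto (fun n : ℕ => Real.log (n : ℝ)) atTop atTop :=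
    Real.tendsto_log_atTop.comp tendsto_natCast_atTop_atTop
  simpa [Real.logb] using (tendsto_const_nhds (x := Real.log c)).div_atTop h

lemma logb_sq_self (n : ℕ) (hn : 2 ≤ n) : Real.logb n (((n * n : ℕ) : ℝ)) = 2 := by
  have hb : (1 : ℝ) < (n : ℝ) := by exact_mod_cast hn
  have hcast : ((n * n : ℕ) : ℝ) = (n : ℝ) ^ 2 := by push_cast; ring
  rw [hcast, Real.logb_pow, Real.logb_self_eq_one hb]
  norm_num

lemma limsup_le_two (d : ℕ → ℕ) (m : ℕ) (hm : 1 ≤ m) (hd : ∀ n, d n ≤ (m * n) * (m * n)) :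
    limsup (fun n : ℕ => ((Real.logb n (d n) : ℝ) : EReal)) atTop ≤ 2 := by
  set v : ℕ → ℝ := fun n => 2 * (Real.logb n m + 1) with hv
  have hvle : ∀ᶠ n : ℕ in atTop,
      ((Real.logb n (d n) : ℝ) : EReal) ≤ ((v n : ℝ) : EReal) := by
    filter_upwards [eventually_ge_atTop 2] with n hn
    rw [EReal.coe_le_coe_iff]
    have hb : (1 : ℝ) < (n : ℝ) := by exact_mod_cast hn
    have hm1 : (1 : ℝ) ≤ (m : ℝ) := by exact_mod_cast hm
    have hlbm : 0 ≤ Real.logb n m := Real.logb_nonneg hb hm1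
    have hvnn : 0 ≤ v n := by rw [hv]; dsimp only; linarith
    rcases Nat.eq_zero_or_pos (d n) with h0 | h0
    · rw [h0]
      simpa using hvnn
    · have hdn : (0 : ℝ) < (d n : ℝ) := by exact_mod_cast h0
      have hnpos : (0 : ℝ) < (n : ℝ) := by linarith
      have hmpos : (0 : ℝ) < (m : ℝ) := by linarith
      have step1 : Real.logb n (d n) ≤ Real.logb n ((((m * n) * (m * n) : ℕ)) : ℝ) := by
        apply (Real.logb_le_logb hb hdn (by positivity)).mpr
        exact_mod_cast hd n
      have hcast : (((m * n) * (m * n) : ℕ) : ℝ) = ((m : ℝ) * (n : ℝ)) ^ 2 := by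
        push_cast; ring
      have step2 : Real.logb n ((((m * n) * (m * n) : ℕ)) : ℝ) = v n := by
        rw [hcast, Real.logb_pow,
          Real.logb_mul (by positivity) (by positivity), Real.logb_self_eq_one hb]
        rw [hv]
        norm_num
      calc Real.logb n (d n) ≤ _ := step1
        _ = v n := step2
  have hvt : Tendsto (fun n : ℕ => ((v n : ℝ) : EReal)) atTop (nhds (2 : EReal)) := by
    rw [show (2 : EReal) = ((2 : ℝ) : EReal) from rfl, EReal.tendsto_coe]
    have h0 := tendsto_logb_const (m : ℝ)
    have h1 : Tendsto v atTop (nhds (2 * (0 + 1))) := ((h0.add_const 1).const_mul 2)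
    simpa using h1
  calc limsup (fun n : ℕ => ((Real.logb n (d n) : ℝ) : EReal)) atTop
      ≤ limsup (fun n : ℕ => ((v n : ℝ) : EReal)) atTop := limsup_le_limsup hvle
    _ = 2 := hvt.limsup_eq

lemma tendsto_two (d : ℕ → ℕ) (hlow : ∀ n, (n / 2) * (n / 2) ≤ d n) (hup : ∀ n, d n ≤ n * n) :
    Tendsto (fun n : ℕ => ((Real.logb n (d n) : ℝ) : EReal)) atTop (nhds (2 : EReal)) := by
  rw [show (2 : EReal) = ((2 : ℝ) : EReal) from rfl, EReal.tendsto_coe]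
  apply tendsto_of_tendsto_of_tendsto_of_le_of_le'
    (g := fun n : ℕ => 2 * (1 - Real.logb n 4)) (h := fun _ : ℕ => (2 : ℝ))
  · have h0 := tendsto_logb_const 4
    have h1 : Tendsto (fun n : ℕ => 2 * (1 - Real.logb n 4)) atTop (nhds (2 * (1 - 0))) :=
      ((h0.const_sub 1).const_mul 2)
    simpa using h1
  · exact tendsto_const_nhds
  · filter_upwards [eventually_ge_atTop 4] with n hn
    have hb : (1 : ℝ) < (n : ℝ) := by
      have : (4 : ℝ) ≤ (n : ℝ) := by exact_mod_cast hn
      linarith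
    have hnpos : (0 : ℝ) < (n : ℝ) := by linarith
    have hn4 : (4 : ℝ) ≤ (n : ℝ) := by exact_mod_cast hn
    -- (n/2 : ℕ) ≥ n/4 as reals
    have hq : (n : ℝ) / 4 ≤ ((n / 2 : ℕ) : ℝ) := by
      have h1 : n ≤ 4 * (n / 2) := by omega
      have h2 : (n : ℝ) ≤ 4 * ((n / 2 : ℕ) : ℝ) := by exact_mod_cast h1
      linarith
    have hq4 : (0 : ℝ) < (n : ℝ) / 4 := by linarith
    have hdn : (0 : ℝ) < (d n : ℝ) := by
      have h1 : 1 ≤ (n / 2) * (n / 2) := by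
        have : 2 ≤ n / 2 := by omega
        nlinarith
      have := (h1.trans (hlow n))
      exact_mod_cast Nat.lt_of_lt_of_le Nat.zero_lt_one this
    calc 2 * (1 - Real.logb n 4)
        = Real.logb n (((n : ℝ) / 4) ^ 2) := by
          rw [Real.logb_pow, Real.logb_div (by linarith) (by norm_num),
            Real.logb_self_eq_one hb]
          push_cast
          ring
      _ ≤ Real.logb n ((((n / 2) * (n / 2) : ℕ)) : ℝ) := by
          apply (Real.logb_le_logb hb (by positivity) ?_).mpr
          · push_cast
            nlinarith [hq, hq4]
          · have h1 : 1 ≤ (n / 2) * (n / 2) := by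
              have : 2 ≤ n / 2 := by omega
              nlinarith
            have : (0:ℕ) < (n / 2) * (n / 2) := by omega
            exact_mod_cast this
      _ ≤ Real.logb n (d n) := by
          apply (Real.logb_le_logb hb ?_ hdn).mpr
          · exact_mod_cast hlow n
          · have h1 : 1 ≤ (n / 2) * (n / 2) := by
              have : 2 ≤ n / 2 := by omega
              nlinarith
            have : (0:ℕ) < (n / 2) * (n / 2) := by omega
            exact_mod_cast this
  · filter_upwards [eventually_ge_atTop 4] with n hn
    have hb : (1 : ℝ) < (n : ℝ) := by
      have : (4 : ℝ) ≤ (n : ℝ) := by exact_mod_cast hn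
      linarith
    rcases Nat.eq_zero_or_pos (d n) with h0 | h0
    · rw [h0]
      norm_num
    · have hdn : (0 : ℝ) < (d n : ℝ) := by exact_mod_cast h0
      calc Real.logb n (d n) ≤ Real.logb n ((n * n : ℕ) : ℝ) := by
            apply (Real.logb_le_logb hb hdn ?_).mpr
            · exact_mod_cast hup n
            · have : (0:ℕ) < n * n := by positivity
              exact_mod_cast this
        _ = 2 := logb_sq_self n (by omega)

end DialgGKAux

open DialgGK in
/-- A dialgebra generated by one element `a` whose monomials `[a…a]ₚ`
(`n` letters, middle index `p`) are linearly independent has GK dimension `2`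
(e.g. the free dialgebra on one generator). -/
theorem diGKdim_free_one_generator
    {k : Type*} [Field k] {D : Type*} [AddCommGroup D] [Module k D] (Dl : DialgebraOps k D) (a : D)
    (hgen : subDialgebraClosure Dl {a} = ⊤)
    (hli : LinearIndependent k
      (fun w : {q : ℕ × ℕ // 1 ≤ q.2 ∧ q.2 ≤ q.1} =>
        fmVal Dl (id : D → D) (List.replicate w.1.1 a) w.1.2)) :
    diGKdim Dl = 2 := by
  have hcli := DialgGKAux.cmon_linearIndependent Dl a hli
  unfold diGKdim
  apply le_antisymm
  · apply iSup_le
    rintro ⟨V, hV⟩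
    obtain ⟨m, hm1, hVle⟩ := DialgGKAux.exists_le_diPowLe Dl a hgen V hV
    exact DialgGKAux.limsup_le_two (fun n => Module.finrank k ↥(diPowLe Dl V n)) m hm1
      (fun n => DialgGKAux.finrank_diPowLe_V Dl a hcli V m hVle n)
  · haveI hfd : FiniteDimensional k (Submodule.span k {a}) :=
      FiniteDimensional.span_of_finite k (Set.finite_singleton a)
    refine le_iSup_of_le ⟨Submodule.span k {a}, hfd⟩ ?_
    rw [(DialgGKAux.tendsto_two
      (fun n => Module.finrank k ↥(diPowLe Dl (Submodule.span k {a}) n))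
      (fun n => DialgGKAux.finrank_diPowLe_lower Dl a hcli n)
      (fun n => DialgGKAux.finrank_diPowLe_upper Dl a hcli n)).limsup_eq]
end
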